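/- Let N be a Poisson(1) random variable and p ∈ (0,1]. Let x = x(p) ∈ (0,1) be the unique solution of x = e^{−px}. Then the Bernoulli(1−x) distribution solves the RDE X =_d max(0, ξ_1 − X_1, …, ξ_N − X_N), where (ξ_i) are i.i.d. Bernoulli(p) and (X_i) are i.i.d. Bernoulli(1−x), all independent of N and each other. -/

import Mathlib

open MeasureTheory ProbabilityTheory

/-- The Bernoulli(q) distribution on `ℕ` (mass `q` at `1`, mass `1-q` at `0`). -/
noncomputable def bernNat (q : ℝ) : Measure ℕ :=
  (ENNReal.ofReal q) • Measure.dirac 1 + (ENNReal.ofReal (1 - q)) • Measure.dirac 0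

open scoped ENNReal NNReal

/-! The maximum vanishes exactly when `ξ_i ≤ X_i` for every `i < N`. Given `N = n` these are `n`
independent events of probability `1 - p x` each, so `P(max = 0) = E[(1 - p x)^N]`, which for a
Poisson(1) variable is `e^{-p x} = x`. Since the maximum is almost surely `0` or `1`, its law is
determined by this mass at `0`. -/

lemma bernNat_apply (q : ℝ) (s : Set ℕ) :
    bernNat q s =
      ENNReal.ofReal q * s.indicator 1 1 + ENNReal.ofReal (1 - q) * s.indicator 1 0 := by
  simp [bernNat]

lemma bernNat_singleton_zero (q : ℝ) : bernNat q {0} = ENNReal.ofReal (1 - q) := by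
  simp [bernNat_apply]

lemma bernNat_setOf_one_le (q : ℝ) : bernNat q {n | 1 ≤ n} = ENNReal.ofReal q := by
  simp [bernNat_apply, Set.indicator]

lemma ae_le_one_bernNat (q : ℝ) : ∀ᵐ n ∂bernNat q, n ≤ 1 := by
  simp [ae_iff, bernNat_apply, Set.indicator]

lemma isProbabilityMeasure_bernNat {q : ℝ} (h0 : 0 ≤ q) (h1 : q ≤ 1) :
    IsProbabilityMeasure (bernNat q) :=
  ⟨by simp [bernNat_apply, ← ENNReal.ofReal_add h0 (sub_nonneg.2 h1)]⟩

lemma lintegral_bernNat (q : ℝ) (f : ℕ → ℝ≥0∞) :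
    ∫⁻ n, f n ∂bernNat q = ENNReal.ofReal q * f 1 + ENNReal.ofReal (1 - q) * f 0 := by
  simp [bernNat, lintegral_add_measure, lintegral_smul_measure, lintegral_dirac]

lemma bernNat_prod_setOf_fst_le_snd {a b : ℝ} (ha0 : 0 ≤ a) (ha1 : a ≤ 1) (hb0 : 0 ≤ b)
    (hb1 : b ≤ 1) :
    (bernNat a).prod (bernNat b) {z | z.1 ≤ z.2} = ENNReal.ofReal (1 - a * (1 - b)) := by
  have := isProbabilityMeasure_bernNat hb0 hb1
  have h1 : Prod.mk 1 ⁻¹' {z : ℕ × ℕ | z.1 ≤ z.2} = {m | 1 ≤ m} := rfl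
  have h0 : Prod.mk 0 ⁻¹' {z : ℕ × ℕ | z.1 ≤ z.2} = Set.univ :=
    Set.eq_univ_of_forall Nat.zero_le
  rw [Measure.prod_apply (Set.to_countable _).measurableSet, lintegral_bernNat, h1, h0,
    bernNat_setOf_one_le, measure_univ, mul_one, ← ENNReal.ofReal_mul ha0,
    ← ENNReal.ofReal_add (by positivity) (by linarith)]
  congr 1
  ring

namespace MeasureTheory

lemma measure_singleton_one_eq_one_sub {μ : Measure ℕ} [IsProbabilityMeasure μ]
    (hμ : ∀ᵐ n ∂μ, n ≤ 1) : μ {1} = 1 - μ {0} := by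
  have h : μ {n | n ≤ 1} = 1 := (ae_iff_prob_eq_one (measurable_of_countable _)).1 hμ
  have hsplit : {n : ℕ | n ≤ 1} = {0} ∪ {1} := by
    ext n
    simp only [Set.mem_ofPred_eq, Set.mem_union, Set.mem_singleton_iff]
    omega
  rw [hsplit, measure_union (by simp) (measurableSet_singleton 1)] at h
  rw [← h, ENNReal.add_sub_cancel_left (measure_ne_top μ _)]

lemma Measure.ext_of_ae_le_one {μ ν : Measure ℕ} [IsProbabilityMeasure μ]
    [IsProbabilityMeasure ν] (hμ : ∀ᵐ n ∂μ, n ≤ 1) (hν : ∀ᵐ n ∂ν, n ≤ 1) (h0 : μ {0} = ν {0}) :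
    μ = ν := by
  refine Measure.ext_of_singleton fun n => ?_
  match n with
  | 0 => exact h0
  | 1 => rw [measure_singleton_one_eq_one_sub hμ, measure_singleton_one_eq_one_sub hν, h0]
  | n + 2 =>
    have hnull : ∀ ρ : Measure ℕ, (∀ᵐ n ∂ρ, n ≤ 1) → ρ {n + 2} = 0 := fun ρ hρ =>
      measure_mono_null (fun m hm => by simp_all) (ae_iff.mp hρ)
    rw [hnull μ hμ, hnull ν hν]

end MeasureTheory

lemma AEMeasurable.sup_range {Ω α β : Type*} [MeasurableSpace Ω] [MeasurableSpace α]
    [SemilatticeSup β] [OrderBot β] [MeasurableSpace β] [MeasurableSup₂ β] {P : Measure Ω}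
    {N : Ω → ℕ} {Y : ℕ → Ω → α} (hN : AEMeasurable N P) (hY : ∀ i, AEMeasurable (Y i) P)
    {g : α → β} (hg : Measurable g) :
    AEMeasurable (fun ω => (Finset.range (N ω)).sup fun i => g (Y i ω)) P := by
  have hsup : Measurable fun z : ℕ × (ℕ → α) => (Finset.range z.1).sup fun i => g (z.2 i) := by
    refine measurable_from_prod_countable_right fun n => ?_
    have h : (fun y : ℕ → α => (Finset.range n).sup fun i => g (y i))
        = (Finset.range n).sup fun i y => g (y i) := by
      funext y
      rw [Finset.sup_apply]
    rw [h]
    exact Finset.sup_induction measurable_const (fun _ h₁ _ h₂ => h₁.sup h₂)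
      fun i _ => hg.comp (measurable_pi_apply i)
  exact hsup.comp_aemeasurable (hN.prodMk (aemeasurable_pi_lambda _ hY))

namespace ProbabilityTheory

lemma tsum_poissonMeasure_singleton_mul_pow (r : ℝ≥0) {s : ℝ} (hs : 0 ≤ s) :
    ∑' n, poissonMeasure r {n} * ENNReal.ofReal s ^ n
      = ENNReal.ofReal (Real.exp (r * (s - 1))) := by
  have h : HasSum (fun n : ℕ => Real.exp (-r) * r ^ n / n.factorial * s ^ n)
      (Real.exp (r * (s - 1))) := by
    have h := (NormedSpace.expSeries_div_hasSum_exp ((r : ℝ) * s)).mul_left (Real.exp (-r))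
    rw [← Real.exp_eq_exp_ℝ, ← Real.exp_add, show -(r : ℝ) + r * s = r * (s - 1) by ring] at h
    have e : (fun n : ℕ => Real.exp (-r) * r ^ n / n.factorial * s ^ n)
        = fun n => Real.exp (-r) * ((r * s) ^ n / n.factorial) := funext fun n => by ring
    rw [e]
    exact h
  rw [← h.tsum_eq, ENNReal.ofReal_tsum_of_nonneg (fun n => by positivity) h.summable]
  refine tsum_congr fun n => ?_
  rw [poissonMeasure_singleton, ← ENNReal.ofReal_pow hs, ← ENNReal.ofReal_mul (by positivity)]

variable {Ω α : Type*} [MeasurableSpace Ω] [MeasurableSpace α] {P : Measure Ω}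

lemma iIndepFun.measure_forall_lt_mem {Y : ℕ → Ω → α} (hY : iIndepFun Y P) {S : Set α}
    (hS : MeasurableSet S) {s : ℝ≥0∞} (hYS : ∀ i, P (Y i ⁻¹' S) = s) (n : ℕ) :
    P {ω | ∀ i < n, Y i ω ∈ S} = s ^ n := by
  have hset : {ω | ∀ i < n, Y i ω ∈ S} = ⋂ i ∈ Finset.range n, Y i ⁻¹' S := by
    ext ω
    simp
  rw [hset, hY.measure_inter_preimage_eq_mul _ (fun _ _ => hS)]
  simp [hYS]

lemma measure_forall_lt_mem_eq_tsum {N : Ω → ℕ} {Y : ℕ → Ω → α} (hN : AEMeasurable N P)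
    (hY : ∀ i, AEMeasurable (Y i) P) (hYind : iIndepFun Y P)
    (hNY : IndepFun N (fun ω i => Y i ω) P) {S : Set α} (hS : MeasurableSet S) {s : ℝ≥0∞}
    (hYS : ∀ i, P (Y i ⁻¹' S) = s) :
    P {ω | ∀ i < N ω, Y i ω ∈ S} = ∑' n, P (N ⁻¹' {n}) * s ^ n := by
  have hT : ∀ n, MeasurableSet {y : ℕ → α | ∀ i < n, y i ∈ S} := fun n => by
    simp only [Set.ofPred_forall]
    exact .iInter fun i => .iInter fun _ => measurable_pi_apply i hS
  have hset : {ω | ∀ i < N ω, Y i ω ∈ S}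
      = ⋃ n, N ⁻¹' {n} ∩ (fun ω i => Y i ω) ⁻¹' {y | ∀ i < n, y i ∈ S} := by
    ext ω
    simp
  rw [hset, measure_iUnion₀]
  · refine tsum_congr fun n => ?_
    rw [hNY.measure_inter_preimage_eq_mul _ _ (measurableSet_singleton n) (hT n)]
    exact congrArg _ (hYind.measure_forall_lt_mem hS hYS n)
  · exact fun m n hmn => Disjoint.aedisjoint <|
      ((Set.disjoint_singleton.2 hmn).preimage N).mono Set.inter_subset_left Set.inter_subset_left
  · exact fun n => (hN.nullMeasurableSet_preimage (measurableSet_singleton n)).inter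
      ((aemeasurable_pi_lambda _ hY).nullMeasurableSet_preimage (hT n))

lemma measure_forall_lt_mem_of_map_eq_poissonMeasure {N : Ω → ℕ} {Y : ℕ → Ω → α} {r : ℝ≥0}
    (hN : P.map N = poissonMeasure r) (hY : ∀ i, AEMeasurable (Y i) P) (hYind : iIndepFun Y P)
    (hNY : IndepFun N (fun ω i => Y i ω) P) {S : Set α} (hS : MeasurableSet S) {s : ℝ}
    (hs : 0 ≤ s) (hYS : ∀ i, P (Y i ⁻¹' S) = ENNReal.ofReal s) :
    P {ω | ∀ i < N ω, Y i ω ∈ S} = ENNReal.ofReal (Real.exp (r * (s - 1))) := by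
  have hNae : AEMeasurable N P := .of_map_ne_zero (hN ▸ IsProbabilityMeasure.ne_zero _)
  rw [measure_forall_lt_mem_eq_tsum hNae hY hYind hNY hS hYS]
  simp_rw [← Measure.map_apply_of_aemeasurable hNae (measurableSet_singleton _), hN]
  exact tsum_poissonMeasure_singleton_mul_pow r hs

end ProbabilityTheory

lemma ae_fst_le_one_of_map_eq_bernNat_prod {Ω : Type*} [MeasurableSpace Ω] {P : Measure Ω}
    {Y : Ω → ℕ × ℕ} (hY : AEMeasurable Y P) {a b : ℝ}
    (hlaw : P.map Y = (bernNat a).prod (bernNat b)) : ∀ᵐ ω ∂P, (Y ω).1 ≤ 1 :=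
  (ae_map_iff hY (measurableSet_le measurable_fst measurable_const)).1
    (hlaw ▸ Measure.quasiMeasurePreserving_fst.ae (ae_le_one_bernNat a))

/-- Let `N` be Poisson(1), `p ∈ (0,1]` and `x ∈ (0,1)` the unique
solution of `x = e^{-px}`. If `(ξ_i)` are i.i.d. Bernoulli(p) and `(X_i)` are i.i.d.
Bernoulli(1-x), all independent of `N` and of each other, then
`max(0, ξ_1 - X_1, …, ξ_N - X_N)` is again Bernoulli(1-x); here values are in `{0,1}`,
`ξ_i - X_i` is the positive part (truncated subtraction in `ℕ`), and the maximum over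
an empty set is `0`. -/
theorem bernoulli_matching_rde
    {Ω : Type*} [MeasurableSpace Ω] (P : Measure Ω) [IsProbabilityMeasure P]
    (p x : ℝ) (hp : p ∈ Set.Ioc (0:ℝ) 1) (hx : x ∈ Set.Ioo (0:ℝ) 1)
    (hfix : x = Real.exp (-(p * x)))
    (N : Ω → ℕ) (pair : ℕ → Ω → ℕ × ℕ)
    (hN : Measure.map N P = poissonMeasure 1)
    (hpairIndep : iIndepFun pair P)
    (hpairLaw : ∀ i, Measure.map (pair i) P = (bernNat p).prod (bernNat (1 - x)))
    (hNindep : IndepFun N (fun ω i => pair i ω) P) :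
    Measure.map
        (fun ω => (Finset.range (N ω)).sup fun i => (pair i ω).1 - (pair i ω).2) P =
      bernNat (1 - x) := by
  obtain ⟨hp0, hp1⟩ := hp
  obtain ⟨hx0, hx1⟩ := hx
  have hx0' : 0 ≤ 1 - x := sub_nonneg.2 hx1.le
  have hx1' : 1 - x ≤ 1 := sub_le_self 1 hx0.le
  have := isProbabilityMeasure_bernNat hp0.le hp1
  have := isProbabilityMeasure_bernNat hx0' hx1'
  have hNae : AEMeasurable N P := .of_map_ne_zero (hN ▸ IsProbabilityMeasure.ne_zero _)
  have hpair : ∀ i, AEMeasurable (pair i) P := fun i =>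
    .of_map_ne_zero (hpairLaw i ▸ IsProbabilityMeasure.ne_zero _)
  set f := fun ω => (Finset.range (N ω)).sup fun i => (pair i ω).1 - (pair i ω).2
  have hf : AEMeasurable f P := hNae.sup_range hpair (measurable_fst.sub measurable_snd)
  have hle : ∀ᵐ ω ∂P, f ω ≤ 1 := by
    have h i := ae_fst_le_one_of_map_eq_bernNat_prod (hpair i) (hpairLaw i)
    filter_upwards [ae_all_iff.2 h] with ω hω
    exact Finset.sup_le fun i _ => (Nat.sub_le _ _).trans (hω i)
  have hS : ∀ i, P (pair i ⁻¹' {z | z.1 ≤ z.2}) = ENNReal.ofReal (1 - p * x) := fun i => by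
    rw [← Measure.map_apply_of_aemeasurable (hpair i)
      (measurableSet_le measurable_fst measurable_snd), hpairLaw i,
      bernNat_prod_setOf_fst_le_snd hp0.le hp1 hx0' hx1', sub_sub_cancel]
  have hzero : f ⁻¹' {0} = {ω | ∀ i < N ω, pair i ω ∈ {z | z.1 ≤ z.2}} := by
    ext ω
    simp [f, Nat.sub_eq_zero_iff_le]
  have := Measure.isProbabilityMeasure_map hf
  refine Measure.ext_of_ae_le_one
    ((ae_map_iff hf (measurableSet_le measurable_id measurable_const)).2 hle)
    (ae_le_one_bernNat _) ?_
  rw [bernNat_singleton_zero, sub_sub_cancel,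
    Measure.map_apply_of_aemeasurable hf (measurableSet_singleton 0), hzero,
    measure_forall_lt_mem_of_map_eq_poissonMeasure hN hpair hpairIndep hNindep
      (measurableSet_le measurable_fst measurable_snd) (by nlinarith) hS]
  conv_rhs => rw [hfix]
  congr 2
  push_cast
  ring
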